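/- arXiv:2509.00001 — 2 statements merged into one kernel-verified Lean document; each statement's English description precedes it below -/
import Mathlib

section
/- Let (Ω, μ) be a measure space, let W be a subspace of the space of measurable K-valued functions on Ω (K = ℝ or ℂ), let V be a vector space over K, and let A : W → V be a linear map. Let r ∈ [0, ∞) satisfy Spark(A) > 2r. Then for every v ∈ V there exists at most one f ∈ W such that A f = v and μ(supp f) ≤ r; that is, if g, h ∈ W satisfy A g = A h = v, μ(supp g) ≤ r and μ(supp h) ≤ r, then g = h. -/
open MeasureTheory ENNReal

/-- The spark of a linear map `A : W → V`, where `W` is a subspace of the measurable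
`K`-valued functions on a measure space `(Ω, μ)`:
`Spark(A) = inf { μ(supp f) : f ∈ ker A, f ≠ 0 }` (with `inf ∅ = ∞`). -/
noncomputable def Spark {Ω K V : Type*} [MeasurableSpace Ω] [RCLike K]
    [AddCommGroup V] [Module K V] (μ : Measure Ω) (W : Submodule K (Ω → K))
    (A : W →ₗ[K] V) : ℝ≥0∞ :=
  sInf {m : ℝ≥0∞ | ∃ f : W, f ∈ LinearMap.ker A ∧ f ≠ 0 ∧
    m = μ (Function.support (f : Ω → K))}

theorem measure_support_sub_le {Ω G : Type*} [MeasurableSpace Ω] [AddGroup G] (μ : Measure Ω)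
    (f g : Ω → G) :
    μ (Function.support (f - g)) ≤ μ (Function.support f) + μ (Function.support g) :=
  (measure_mono (Function.support_sub f g)).trans (measure_union_le _ _)

section Spark

variable {Ω K V : Type*} [MeasurableSpace Ω] [RCLike K] [AddCommGroup V] [Module K V]
  {μ : Measure Ω} {W : Submodule K (Ω → K)} {A : W →ₗ[K] V}

variable (μ) in
theorem spark_le_measure_support {f : W} (hf : f ∈ LinearMap.ker A) (hf₀ : f ≠ 0) :
    Spark μ W A ≤ μ (Function.support (f : Ω → K)) :=
  sInf_le ⟨f, hf, hf₀, rfl⟩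

theorem eq_of_map_eq_of_measure_support_add_lt_spark {g h : W} (hgh : A g = A h)
    (hsupp : μ (Function.support (g : Ω → K)) + μ (Function.support (h : Ω → K)) <
      Spark μ W A) :
    g = h := by
  by_contra hne
  have hker : g - h ∈ LinearMap.ker A := by
    rw [LinearMap.mem_ker, map_sub, hgh, sub_self]
  have hspark := spark_le_measure_support μ hker (sub_ne_zero.mpr hne)
  rw [Submodule.coe_sub] at hspark
  exact (hspark.trans (measure_support_sub_le μ _ _)).not_gt hsupp

end Spark

theorem continuous_donoho_elad_spark_sparsity_one_general
    {Ω K V : Type*} [MeasurableSpace Ω] [RCLike K]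
    [AddCommGroup V] [Module K V] (μ : Measure Ω) (W : Submodule K (Ω → K))
    (A : W →ₗ[K] V)
    (r : ℝ≥0∞) (hspark : Spark μ W A > 2 * r) :
    ∀ v : V, ∀ g h : W, A g = v → A h = v →
      μ (Function.support (g : Ω → K)) ≤ r →
      μ (Function.support (h : Ω → K)) ≤ r → g = h := by
  intro v g h hg hh hgr hhr
  have hsupp : μ (Function.support (g : Ω → K)) + μ (Function.support (h : Ω → K)) <
      Spark μ W A :=
    calc μ (Function.support (g : Ω → K)) + μ (Function.support (h : Ω → K))
        ≤ r + r := add_le_add hgr hhr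
      _ = 2 * r := (two_mul r).symm
      _ < Spark μ W A := hspark
  exact eq_of_map_eq_of_measure_support_add_lt_spark (hg.trans hh.symm) hsupp

/-- Continuous Donoho–Elad spark sparsity theorem, part (i): if `Spark(A) > 2r`,
then for every `v` there is at most one `f` with `A f = v` and `μ(supp f) ≤ r`. -/
theorem continuous_donoho_elad_spark_sparsity_one
    {Ω K V : Type*} [MeasurableSpace Ω] [RCLike K]
    [AddCommGroup V] [Module K V] (μ : Measure Ω) (W : Submodule K (Ω → K))
    (hW : ∀ f ∈ W, Measurable f) (A : W →ₗ[K] V)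
    (r : ℝ≥0∞) (hr : r ≠ ⊤) (hspark : Spark μ W A > 2 * r) :
    ∀ v : V, ∀ g h : W, A g = v → A h = v →
      μ (Function.support (g : Ω → K)) ≤ r →
      μ (Function.support (h : Ω → K)) ≤ r → g = h :=
  continuous_donoho_elad_spark_sparsity_one_general μ W A r hspark
end

section
/- Let H be a finite-dimensional Hilbert space over K (K = ℝ or ℂ) and let τ₁, …, τₙ be a normalized frame for H. If h ∈ H can be written as h = θτ* c for some c ∈ Kⁿ satisfying ‖c‖₀ < (1/2) Spark({τⱼ}ⱼ=1ⁿ), then c is the unique sparsest solution: for every d ∈ Kⁿ with θτ* d = h and d ≠ c, one has ‖c‖₀ < ‖d‖₀. -/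
/-- The spark of a finite family `τ : Fin n → H`:
`min { ‖d‖₀ : d ∈ ker(θτ*), d ≠ 0 }`, where `θτ* d = ∑ j, d j • τ j` and
`‖d‖₀` is the number of nonzero entries of `d`. -/
noncomputable def sparkFam (K : Type*) {H : Type*} [RCLike K] [NormedAddCommGroup H]
    [InnerProductSpace K H] {n : ℕ} (τ : Fin n → H) : ℕ :=
  sInf {m : ℕ | ∃ d : Fin n → K, d ≠ 0 ∧ (∑ j, d j • τ j) = 0 ∧
    m = (Function.support d).ncard}

/-- Donoho–Elad spark sparsity theorem, part (ii): if `h = θτ* c` with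
`‖c‖₀ < (1/2) Spark({τⱼ})`, then `c` is the unique sparsest solution. -/
theorem donoho_elad_spark_sparsity_two
    {K H : Type*} [RCLike K] [NormedAddCommGroup H] [InnerProductSpace K H]
    [FiniteDimensional K H] {n : ℕ} (τ : Fin n → H)
    (hspan : Submodule.span K (Set.range τ) = ⊤)
    (hnorm : ∀ j, ‖τ j‖ = 1)
    (h : H) (c : Fin n → K) (hc : (∑ j, c j • τ j) = h)
    (hsparse : ((Function.support c).ncard : ℝ) < (1 / 2 : ℝ) * sparkFam K τ) :
    ∀ d : Fin n → K, (∑ j, d j • τ j) = h → d ≠ c →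
      (Function.support c).ncard < (Function.support d).ncard := by
  intro d hd hdc
  set e : Fin n → K := d - c with he
  have hene : e ≠ 0 := sub_ne_zero.mpr hdc
  have hesum : (∑ j, e j • τ j) = 0 := by
    simp only [he, Pi.sub_apply, sub_smul, Finset.sum_sub_distrib, hd, hc, sub_self]
  have hmem : (Function.support e).ncard ∈ {m : ℕ | ∃ d : Fin n → K, d ≠ 0 ∧
      (∑ j, d j • τ j) = 0 ∧ m = (Function.support d).ncard} := ⟨e, hene, hesum, rfl⟩
  have hspark : sparkFam K τ ≤ (Function.support e).ncard := Nat.sInf_le hmem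
  have hsub : Function.support e ⊆ Function.support d ∪ Function.support c := by
    intro j hj
    by_contra hcon
    simp only [Set.mem_union, Function.mem_support, not_or, not_not] at hcon
    exact hj (by simp [he, hcon.1, hcon.2])
  have hfin : (Function.support d ∪ Function.support c).Finite := Set.toFinite _
  have hle : (Function.support e).ncard ≤
      (Function.support d).ncard + (Function.support c).ncard := by
    calc (Function.support e).ncard ≤ (Function.support d ∪ Function.support c).ncard :=
          Set.ncard_le_ncard hsub hfin
      _ ≤ (Function.support d).ncard + (Function.support c).ncard :=
          Set.ncard_union_le _ _
  have h2 : 2 * ((Function.support c).ncard : ℝ) < (sparkFam K τ : ℝ) := by linarith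
  have : ((Function.support c).ncard : ℝ) < (Function.support d).ncard := by
    have h1 : (sparkFam K τ : ℝ) ≤ (Function.support e).ncard := by exact_mod_cast hspark
    have h3 : ((Function.support e).ncard : ℝ) ≤
        (Function.support d).ncard + (Function.support c).ncard := by exact_mod_cast hle
    linarith
  exact_mod_cast this
end
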